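/- arXiv:2212.13308 — 6 statements merged into one kernel-verified Lean document; each statement's English description precedes it below -/
import Mathlib

section
/- Let F be a homogeneous polynomial of degree d ≥ 2 in variables x_0, ..., x_{n+1} whose sparsity is greater than 2 (any two distinct monomials of F are at L¹-distance > 2 in their exponent vectors). Then the rank of the linear map x ↦ ∂F/∂x on the span of the variables equals the number of variables actually appearing in F. -/
/-!
The support of `∂F/∂xᵢ` consists of the `m` with `m + eᵢ` in the support of `F`. A common
monomial `m` of `∂F/∂xᵢ` and `∂F/∂xⱼ` with `i ≠ j` would give two monomials `m + eᵢ`, `m + eⱼ`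
of `F` at distance exactly 2, so sparsity makes the partial derivatives have pairwise disjoint
supports. In characteristic zero `∂F/∂xᵢ ≠ 0` exactly when `xᵢ` appears in `F`, and nonzero
polynomials with disjoint supports are linearly independent.
-/

open MvPolynomial

/-- The differential rank of a polynomial: the rank of the linear map
`x ↦ ∂F/∂x` on the span of the variables. -/
noncomputable def drank {N : ℕ} (F : MvPolynomial (Fin N) ℂ) : ℕ :=
  Module.finrank ℂ (Submodule.span ℂ (Set.range fun i => MvPolynomial.pderiv i F))

namespace MvPolynomial

section CommSemiring

variable {R σ : Type*} [CommSemiring R]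

theorem add_single_mem_support_of_mem_support_pderiv {i : σ} {F : MvPolynomial σ R}
    {m : σ →₀ ℕ} (hm : m ∈ (pderiv i F).support) : m + Finsupp.single i 1 ∈ F.support := by
  rw [mem_support_iff, coeff_pderiv] at hm
  exact mem_support_iff.mpr (left_ne_zero_of_mul hm)

theorem pderiv_ne_zero_of_mem_vars [NoZeroDivisors R] [CharZero R] {i : σ}
    {F : MvPolynomial σ R} (hi : i ∈ F.vars) : pderiv i F ≠ 0 := by
  obtain ⟨m, hm, him⟩ := (mem_vars_iff_mem_support i).mp hi
  have hle : Finsupp.single i 1 ≤ m :=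
    Finsupp.single_le_iff.mpr (Nat.one_le_iff_ne_zero.mpr (Finsupp.mem_support_iff.mp him))
  refine ne_zero_iff.mpr ⟨m - Finsupp.single i 1, ?_⟩
  rw [coeff_pderiv, tsub_add_cancel_of_le hle]
  exact mul_ne_zero (mem_support_iff.mp hm) (Nat.cast_add_one_ne_zero _)

theorem span_range_pderiv_eq_span_vars (F : MvPolynomial σ R) :
    Submodule.span R (Set.range fun i => pderiv i F) =
      Submodule.span R (Set.range fun i : F.vars => pderiv (i : σ) F) := by
  apply le_antisymm <;> rw [Submodule.span_le]
  · rintro _ ⟨i, rfl⟩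
    by_cases hi : i ∈ F.vars
    · exact Submodule.subset_span ⟨⟨i, hi⟩, rfl⟩
    · simp only [pderiv_eq_zero_of_notMem_vars hi, SetLike.mem_coe, Submodule.zero_mem]
  · rintro _ ⟨i, rfl⟩
    exact Submodule.subset_span ⟨(i : σ), rfl⟩

end CommSemiring

theorem linearIndependent_of_pairwise_disjoint_support {R σ ι : Type*} [CommRing R]
    [NoZeroDivisors R] {p : ι → MvPolynomial σ R}
    (hdisj : Pairwise fun i j => Disjoint (p i).support (p j).support) (hne : ∀ i, p i ≠ 0) :
    LinearIndependent R p := by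
  classical
  rw [linearIndependent_iff']
  intro s g hsum i hi
  obtain ⟨m, hm⟩ := support_nonempty.mpr (hne i)
  have hcoeff := congrArg (coeff m) hsum
  rw [coeff_sum, Finset.sum_eq_single i, coeff_smul, coeff_zero, smul_eq_mul] at hcoeff
  · exact (mul_eq_zero.mp hcoeff).resolve_right (mem_support_iff.mp hm)
  · intro j _ hji
    rw [coeff_smul, notMem_support_iff.mp (Finset.disjoint_right.mp (hdisj hji) hm), smul_zero]
  · exact fun h => (h hi).elim

open Finsupp in
theorem sum_natAbs_add_single_sub_add_single {σ : Type*} [Fintype σ] {i j : σ} (hij : i ≠ j)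
    (m : σ →₀ ℕ) :
    ∑ k, (((m + single i 1 : σ →₀ ℕ) k : ℤ) - ((m + single j 1 : σ →₀ ℕ) k : ℤ)).natAbs = 2 := by
  classical
  calc _ = ∑ k, ((if i = k then 1 else 0) + (if j = k then 1 else 0)) :=
        Finset.sum_congr rfl fun k _ => ?_
    _ = 2 := by simp only [Finset.sum_add_distrib, Finset.sum_ite_eq, Finset.mem_univ, if_true]
  simp only [Finsupp.add_apply, single_apply]
  by_cases hik : i = k <;> by_cases hjk : j = k
  · exact absurd (hik.trans hjk.symm) hij
  all_goals simp [hik, hjk]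

theorem disjoint_support_pderiv_of_sparse {R σ : Type*} [CommSemiring R] [Fintype σ]
    {F : MvPolynomial σ R}
    (hsparse : ∀ m₁ ∈ F.support, ∀ m₂ ∈ F.support, m₁ ≠ m₂ →
      2 < ∑ i, ((m₁ i : ℤ) - (m₂ i : ℤ)).natAbs)
    {i j : σ} (hij : i ≠ j) : Disjoint (pderiv i F).support (pderiv j F).support := by
  refine Finset.disjoint_left.mpr fun m hi hj => ?_
  have hne : m + Finsupp.single i 1 ≠ m + Finsupp.single j 1 := fun h =>
    hij (Finsupp.single_left_injective one_ne_zero (add_left_cancel h))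
  have hdist := hsparse _ (add_single_mem_support_of_mem_support_pderiv hi) _
    (add_single_mem_support_of_mem_support_pderiv hj) hne
  rw [sum_natAbs_add_single_sub_add_single hij] at hdist
  exact hdist.false

end MvPolynomial

theorem stmt_4_general (N : ℕ) (F : MvPolynomial (Fin N) ℂ)
    (hspar : ∀ m₁ ∈ F.support, ∀ m₂ ∈ F.support, m₁ ≠ m₂ →
      2 < ∑ i, ((m₁ i : ℤ) - (m₂ i : ℤ)).natAbs) :
    drank F = F.vars.card := by
  have hli : LinearIndependent ℂ fun i : F.vars => pderiv (i : Fin N) F :=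
    linearIndependent_of_pairwise_disjoint_support
      (fun _ _ hij => disjoint_support_pderiv_of_sparse hspar (Subtype.coe_injective.ne hij))
      (fun i => pderiv_ne_zero_of_mem_vars i.2)
  rw [drank, span_range_pderiv_eq_span_vars, finrank_span_eq_card hli, Fintype.card_coe]

theorem stmt_4 (N d : ℕ) (hd : 2 ≤ d) (F : MvPolynomial (Fin N) ℂ)
    (hF : F.IsHomogeneous d)
    (hspar : ∀ m₁ ∈ F.support, ∀ m₂ ∈ F.support, m₁ ≠ m₂ →
      2 < ∑ i, ((m₁ i : ℤ) - (m₂ i : ℤ)).natAbs) :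
    drank F = F.vars.card :=
  stmt_4_general N F hspar
end

section
/- Let d ≥ 3 and n ≥ 1. The group of diagonal matrices diag(λ_0, ..., λ_{n+1}) in PGL_{n+2}(C) preserving the Klein form x_0^{d-1}x_1 + x_1^{d-1}x_2 + ... + x_{n+1}^{d-1}x_0 up to scalar is cyclic of order m = ((d-1)^{n+2} - (-1)^{n+2})/d. -/
/-- The homomorphism sending a scalar `c ∈ ℂˣ` to the constant diagonal tuple. -/
def constHom (k : ℕ) : ℂˣ →* (Fin k → ℂˣ) where
  toFun c := fun _ => c
  map_one' := rfl
  map_mul' _ _ := rfl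

/-- The group of invertible diagonal scalings `diag(λ₀, ..., λ_{n+1})` preserving the
Klein form `x₀^{d-1}x₁ + x₁^{d-1}x₂ + ⋯ + x_{n+1}^{d-1}x₀` up to a scalar `μ`,
i.e. those with `λᵢ^{d-1} λ_{i+1} = μ` for all `i` (indices mod `n+2`). -/
def KleinDiag (n d : ℕ) : Subgroup (Fin (n + 2) → ℂˣ) where
  carrier := {l | ∃ μ : ℂˣ, ∀ i, l i ^ (d - 1) * l (i + 1) = μ}
  one_mem' := ⟨1, fun _ => by simp⟩
  mul_mem' := by
    rintro a b ⟨μ, ha⟩ ⟨ν, hb⟩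
    exact ⟨μ * ν, fun i => by
      rw [Pi.mul_apply, Pi.mul_apply, mul_pow, mul_mul_mul_comm, ha i, hb i]⟩
  inv_mem' := by
    rintro a ⟨μ, ha⟩
    exact ⟨μ⁻¹, fun i => by
      rw [Pi.inv_apply, Pi.inv_apply, inv_pow, ← mul_inv, ha i]⟩

/-!
Write `tᵢ = λᵢ / λᵢ₊₁`. Comparing `λᵢ^(d-1) λᵢ₊₁ = λᵢ₊₁^(d-1) λᵢ₊₂` gives `tᵢ₊₁ = tᵢ^(1-d)`, hence
`tᵢ = t₀^((1-d)^i)`. So `λ ↦ t₀` has exactly the scalars as kernel, and since `∏ tᵢ = 1` its image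
consists of roots of unity of order dividing `∑_{i<n+2} (1-d)^i = ±m`. Conversely every such root
`t` is attained, by `λᵢ = t^(-∑_{j<i} (1-d)^j)`. Thus the quotient by the scalars is `μ_m`.
-/

open Finset Fin.NatCast

theorem Finset.prod_zpow_eq_zpow_sum {ι G : Type*} [CommGroup G] (s : Finset ι) (f : ι → ℤ)
    (a : G) : ∏ i ∈ s, a ^ f i = a ^ ∑ i ∈ s, f i := by
  induction s using Finset.cons_induction with
  | empty => simp
  | cons i s hi ih => rw [prod_cons, sum_cons, ih, zpow_add]

section CyclicRecurrence

variable {G : Type*} [CommGroup G] {k : ℕ} [NeZero k] {e : ℕ} {μ : G} {l : Fin k → G}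

theorem div_add_one_add_one_eq_zpow (hl : ∀ i, l i ^ e * l (i + 1) = μ) (i : Fin k) :
    l (i + 1) / l (i + 1 + 1) = (l i / l (i + 1)) ^ (-(e : ℤ)) := by
  rw [zpow_neg, zpow_natCast, div_pow, inv_div, div_eq_div_iff_mul_eq_mul, mul_comm]
  exact (hl i).trans (hl (i + 1)).symm

theorem div_natCast_add_one_eq_zpow (hl : ∀ i, l i ^ e * l (i + 1) = μ) (j : ℕ) :
    l j / l (j + 1) = (l 0 / l 1) ^ ((-e : ℤ) ^ j) := by
  induction j with
  | zero => simp
  | succ j ih =>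
    rw [Nat.cast_succ, div_add_one_add_one_eq_zpow hl, ih, ← zpow_mul, ← pow_succ]

theorem div_add_one_eq_zpow (hl : ∀ i, l i ^ e * l (i + 1) = μ) (i : Fin k) :
    l i / l (i + 1) = (l 0 / l 1) ^ ((-e : ℤ) ^ (i : ℕ)) := by
  simpa using div_natCast_add_one_eq_zpow hl i

theorem prod_div_add_one (l : Fin k → G) : ∏ i, l i / l (i + 1) = 1 := by
  rw [prod_div_distrib, Fintype.prod_equiv (Equiv.addRight 1) (fun i => l (i + 1)) l fun _ => rfl,
    div_self']

theorem zpow_geom_sum_eq_one (hl : ∀ i, l i ^ e * l (i + 1) = μ) :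
    (l 0 / l 1) ^ ∑ j ∈ range k, (-e : ℤ) ^ j = 1 := by
  rw [← prod_zpow_eq_zpow_sum, ← Fin.prod_univ_eq_prod_range, ← prod_div_add_one l]
  exact Fintype.prod_congr _ _ fun i => (div_add_one_eq_zpow hl i).symm

theorem eq_apply_zero_of_div_eq_one (hl : ∀ i, l i ^ e * l (i + 1) = μ) (h : l 0 / l 1 = 1)
    (i : Fin k) : l i = l 0 := by
  suffices ∀ j : ℕ, l j = l 0 by simpa using this i
  intro j
  induction j with
  | zero => simp
  | succ j ih =>
    rw [← ih, Nat.cast_succ, eq_comm, ← div_eq_one, div_natCast_add_one_eq_zpow hl, h, one_zpow]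

theorem exists_div_eq_of_zpow_geom_sum_eq_one {t : G}
    (ht : t ^ ∑ j ∈ range k, (-e : ℤ) ^ j = 1) :
    ∃ l : Fin k → G, (∀ i, l i ^ e * l (i + 1) = t⁻¹) ∧ l 0 / l 1 = t := by
  refine ⟨fun i => t ^ (-∑ j ∈ range i, (-e : ℤ) ^ j), fun i => ?_, ?_⟩
  · rw [← zpow_natCast, ← zpow_mul, ← zpow_add, ← zpow_neg_one]
    obtain hi | hi : (i : ℕ) + 1 < k ∨ (i : ℕ) + 1 = k := by omega
    · rw [Fin.val_add_one_of_lt' hi, geom_sum_succ]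
      ring_nf
    · have hi0 : i + 1 = 0 := Fin.ext <| by simp [Fin.val_add, hi]
      rw [← hi, geom_sum_succ] at ht
      rw [hi0, Fin.val_zero, range_zero, sum_empty, neg_zero, add_zero, ← one_mul (t ^ (-1 : ℤ)),
        ← ht, ← zpow_add]
      ring_nf
  · obtain rfl | hk := (Nat.one_le_iff_ne_zero.2 (NeZero.ne k)).eq_or_lt
    · simpa using ht.symm -- for `k = 1`, `l 0 / l 1 = 1` and `ht` says `t = 1`
    · simp [Nat.mod_eq_of_lt hk]

end CyclicRecurrence

theorem natAbs_geom_sum_one_sub {d m k : ℕ} (hd : d ≠ 0)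
    (hm : (d : ℤ) * m = ((d : ℤ) - 1) ^ k - (-1) ^ k) :
    (∑ j ∈ range k, (1 - (d : ℤ)) ^ j).natAbs = m := by
  have hgeom := geom_sum_mul (1 - (d : ℤ)) k
  have hsign : ((-1 : ℤ) ^ k) ^ 2 = 1 := by rw [← pow_mul, pow_mul', neg_one_sq, one_pow]
  have hsum : ∑ j ∈ range k, (1 - (d : ℤ)) ^ j = -(-1) ^ k * m := by
    refine mul_left_cancel₀ (Int.natCast_ne_zero.2 hd) ?_
    have hpow : (1 - (d : ℤ)) ^ k = (-1) ^ k * ((d : ℤ) - 1) ^ k := by rw [← mul_pow]; ring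
    linear_combination -hgeom + (-1) ^ k * hm - hsign - hpow
  simp [hsum, Int.natAbs_mul, Int.natAbs_pow]

namespace KleinDiag

def ratio (n d : ℕ) : KleinDiag n d →* ℂˣ :=
  (Pi.evalMonoidHom (fun _ : Fin (n + 2) => ℂˣ) 0 / Pi.evalMonoidHom _ 1).comp
    (KleinDiag n d).subtype

theorem ratio_apply {n d : ℕ} (l : KleinDiag n d) :
    ratio n d l = (l : Fin (n + 2) → ℂˣ) 0 / (l : Fin (n + 2) → ℂˣ) 1 :=
  rfl

theorem ker_ratio (n d : ℕ) :
    (ratio n d).ker = (constHom (n + 2)).range.subgroupOf (KleinDiag n d) := by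
  ext ⟨l, μ, hl⟩
  rw [MonoidHom.mem_ker, Subgroup.mem_subgroupOf, MonoidHom.mem_range, ratio_apply]
  constructor
  · intro h
    exact ⟨l 0, funext fun i => (eq_apply_zero_of_div_eq_one hl h i).symm⟩
  · rintro ⟨c, rfl⟩
    exact div_self' c

theorem range_ratio {n d m : ℕ} (hd : d ≠ 0)
    (hm : (d : ℤ) * m = ((d : ℤ) - 1) ^ (n + 2) - (-1 : ℤ) ^ (n + 2)) :
    (ratio n d).range = rootsOfUnity m ℂ := by
  have hS : (∑ j ∈ range (n + 2), (-((d - 1 : ℕ) : ℤ)) ^ j).natAbs = m := by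
    rw [show -((d - 1 : ℕ) : ℤ) = 1 - d by omega]
    exact natAbs_geom_sum_one_sub hd hm
  ext t
  rw [MonoidHom.mem_range, mem_rootsOfUnity, ← hS, pow_natAbs_eq_one]
  constructor
  · rintro ⟨⟨l, μ, hl⟩, rfl⟩
    exact zpow_geom_sum_eq_one hl
  · intro ht
    obtain ⟨l, hl, rfl⟩ := exists_div_eq_of_zpow_geom_sum_eq_one ht
    exact ⟨⟨l, _, hl⟩, rfl⟩

end KleinDiag

theorem stmt_6_general (n d m : ℕ) (hd : 3 ≤ d)
    (hm : (d : ℤ) * m = ((d : ℤ) - 1) ^ (n + 2) - (-1 : ℤ) ^ (n + 2)) :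
    IsCyclic (KleinDiag n d ⧸ ((constHom (n + 2)).range.subgroupOf (KleinDiag n d))) ∧
    Nat.card (KleinDiag n d ⧸ ((constHom (n + 2)).range.subgroupOf (KleinDiag n d))) = m := by
  have : NeZero m := ⟨by
    rintro rfl
    have : (-1 : ℤ) ^ (n + 2) < ((d : ℤ) - 1) ^ (n + 2) :=
      ((le_abs_self _).trans_eq (abs_neg_one_pow _)).trans_lt (one_lt_pow₀ (by omega) (by omega))
    push_cast at hm
    linarith⟩
  let e := (QuotientGroup.quotientMulEquivOfEq (KleinDiag.ker_ratio n d)).symm.trans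
    ((QuotientGroup.quotientKerEquivRange _).trans
      (MulEquiv.subgroupCongr (KleinDiag.range_ratio (by omega) hm)))
  exact ⟨e.isCyclic.2 inferInstance, (Nat.card_congr e.toEquiv).trans (Complex.card_rootsOfUnity m)⟩

theorem stmt_6 (n d m : ℕ) (hn : 1 ≤ n) (hd : 3 ≤ d)
    (hm : (d : ℤ) * m = ((d : ℤ) - 1) ^ (n + 2) - (-1 : ℤ) ^ (n + 2)) :
    IsCyclic (KleinDiag n d ⧸ ((constHom (n + 2)).range.subgroupOf (KleinDiag n d))) ∧
    Nat.card (KleinDiag n d ⧸ ((constHom (n + 2)).range.subgroupOf (KleinDiag n d))) = m :=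
  stmt_6_general n d m hd hm
end

section
/- Let d ≥ 4, n ≥ 2. The group of diagonal matrices in PGL_{n+2}(C) preserving the Delsarte form x_0^{d-1}x_1 + x_1^{d-1}x_2 + ... + x_n^{d-1}x_{n+1} + x_{n+1}^d up to scalar is cyclic of order (d-1)^{n+1}. -/
/-- The group of invertible diagonal scalings `diag(λ₀, ..., λ_{n+1})` preserving the
Delsarte form `x₀^{d-1}x₁ + ⋯ + x_n^{d-1}x_{n+1} + x_{n+1}^d` up to a scalar `μ`,
i.e. those with `λᵢ^{d-1} λ_{i+1} = μ` for `i = 0, …, n` and `λ_{n+1}^d = μ`. -/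
def DelsarteDiag (n d : ℕ) : Subgroup (Fin (n + 2) → ℂˣ) where
  carrier := {l | ∃ μ : ℂˣ,
    (∀ i : Fin (n + 1), l i.castSucc ^ (d - 1) * l i.succ = μ) ∧
      l (Fin.last (n + 1)) ^ d = μ}
  one_mem' := ⟨1, fun _ => by simp, by simp⟩
  mul_mem' := by
    rintro a b ⟨μ, ha, ha'⟩ ⟨ν, hb, hb'⟩
    refine ⟨μ * ν, fun i => ?_, ?_⟩
    · rw [Pi.mul_apply, Pi.mul_apply, mul_pow, mul_mul_mul_comm, ha i, hb i]
    · rw [Pi.mul_apply, mul_pow, ha', hb']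
  inv_mem' := by
    rintro a ⟨μ, ha, ha'⟩
    refine ⟨μ⁻¹, fun i => ?_, ?_⟩
    · rw [Pi.inv_apply, Pi.inv_apply, inv_pow, ← mul_inv, ha i]
    · rw [Pi.inv_apply, inv_pow, ha']

section Chain

variable {G : Type*} [CommGroup G] {e k : ℕ} {a : Fin (k + 1) → G}

theorem pow_pow_eq_one_of_chain (h : ∀ i : Fin k, a i.castSucc ^ e * a i.succ = 1)
    (hlast : a (Fin.last k) = 1) (i : Fin (k + 1)) : a i ^ e ^ (k - i) = 1 := by
  induction i using Fin.reverseInduction with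
  | last => simp [hlast]
  | cast i ih =>
    have hexp : k - (i.castSucc : ℕ) = k - (i.succ : ℕ) + 1 := by
      simp only [Fin.val_castSucc, Fin.val_succ]; omega
    rw [hexp, pow_succ', pow_mul, eq_inv_of_mul_eq_one_left (h i), inv_pow, ih, inv_one]

theorem eq_one_of_chain (h : ∀ i : Fin k, a i.castSucc ^ e * a i.succ = 1) (h0 : a 0 = 1)
    (i : Fin (k + 1)) : a i = 1 := by
  induction i using Fin.induction with
  | zero => exact h0
  | succ i ih => simpa [ih] using h i

theorem zpow_neg_pow_chain (z : G) (i : ℕ) :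
    (z ^ ((-e : ℤ) ^ i)) ^ e * z ^ ((-e : ℤ) ^ (i + 1)) = 1 := by
  rw [← zpow_natCast _ e, ← zpow_mul, ← zpow_add, pow_succ]
  simp

theorem zpow_neg_pow_eq_one {z : G} (hz : z ^ e ^ k = 1) : z ^ ((-e : ℤ) ^ k) = 1 := by
  rw [neg_pow, mul_comm, zpow_mul, ← Nat.cast_pow, zpow_natCast, hz, one_zpow]

end Chain

section Delsarte

variable {n d : ℕ}

theorem delsarte_chain (hd : 0 < d) {l : Fin (n + 2) → ℂˣ} (hl : l ∈ DelsarteDiag n d)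
    (i : Fin (n + 1)) :
    (l i.castSucc / l (Fin.last (n + 1))) ^ (d - 1) * (l i.succ / l (Fin.last (n + 1))) = 1 := by
  obtain ⟨μ, hμ, hlast⟩ := hl
  rw [div_pow, div_mul_div_comm, hμ i, ← pow_succ, Nat.sub_add_cancel hd, hlast, div_self']

variable (n d) in
def delsarteRatio : DelsarteDiag n d →* ℂˣ :=
  (Pi.evalMonoidHom (fun _ => ℂˣ) 0 / Pi.evalMonoidHom (fun _ => ℂˣ) (Fin.last (n + 1))).comp
    (DelsarteDiag n d).subtype

theorem delsarteRatio_apply (l : DelsarteDiag n d) :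
    delsarteRatio n d l = l.1 0 / l.1 (Fin.last (n + 1)) := rfl

theorem ker_delsarteRatio (hd : 0 < d) :
    (delsarteRatio n d).ker = (constHom (n + 2)).range.subgroupOf (DelsarteDiag n d) := by
  ext ⟨l, hl⟩
  simp only [MonoidHom.mem_ker, delsarteRatio_apply, Subgroup.mem_subgroupOf, MonoidHom.mem_range]
  constructor
  · intro h
    refine ⟨l (Fin.last (n + 1)), funext fun i => ?_⟩
    exact (div_eq_one.1 (eq_one_of_chain (a := fun i => l i / l (Fin.last (n + 1)))
      (delsarte_chain hd hl) h i)).symm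
  · rintro ⟨c, rfl⟩
    exact div_self' c

theorem range_delsarteRatio (hd : 0 < d) :
    (delsarteRatio n d).range = rootsOfUnity ((d - 1) ^ (n + 1)) ℂ := by
  ext z
  simp only [MonoidHom.mem_range, mem_rootsOfUnity]
  constructor
  · rintro ⟨⟨l, hl⟩, rfl⟩
    simpa [delsarteRatio_apply] using
      pow_pow_eq_one_of_chain (a := fun i => l i / l (Fin.last (n + 1)))
        (delsarte_chain hd hl) (div_self' _) 0
  · intro hz
    let a : Fin (n + 2) → ℂˣ := fun i => z ^ ((-(d - 1 : ℕ) : ℤ) ^ (i : ℕ))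
    have hlast : a (Fin.last (n + 1)) = 1 := zpow_neg_pow_eq_one hz
    have ha : a ∈ DelsarteDiag n d :=
      ⟨1, fun i => zpow_neg_pow_chain z i, by rw [hlast, one_pow]⟩
    refine ⟨⟨a, ha⟩, ?_⟩
    change a 0 / a (Fin.last (n + 1)) = z
    simp [a, hlast]

noncomputable def delsarteQuotientEquiv (hd : 0 < d) :
    DelsarteDiag n d ⧸ (constHom (n + 2)).range.subgroupOf (DelsarteDiag n d) ≃*
      rootsOfUnity ((d - 1) ^ (n + 1)) ℂ :=
  (QuotientGroup.quotientMulEquivOfEq (ker_delsarteRatio hd).symm).trans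
    ((QuotientGroup.quotientKerEquivRange _).trans
      (MulEquiv.subgroupCongr (range_delsarteRatio hd)))

end Delsarte

theorem stmt_7_general (n d : ℕ) (hd : 4 ≤ d) :
    IsCyclic (DelsarteDiag n d ⧸ ((constHom (n + 2)).range.subgroupOf (DelsarteDiag n d))) ∧
    Nat.card (DelsarteDiag n d ⧸ ((constHom (n + 2)).range.subgroupOf (DelsarteDiag n d)))
      = (d - 1) ^ (n + 1) := by
  have hd₀ : 0 < d := by omega
  have : NeZero ((d - 1) ^ (n + 1)) := ⟨pow_ne_zero _ (by omega)⟩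
  let e := delsarteQuotientEquiv (n := n) hd₀
  refine ⟨e.isCyclic.2 inferInstance, ?_⟩
  rw [Nat.card_congr e.toEquiv, Complex.card_rootsOfUnity]

theorem stmt_7 (n d : ℕ) (hn : 2 ≤ n) (hd : 4 ≤ d) :
    IsCyclic (DelsarteDiag n d ⧸ ((constHom (n + 2)).range.subgroupOf (DelsarteDiag n d))) ∧
    Nat.card (DelsarteDiag n d ⧸ ((constHom (n + 2)).range.subgroupOf (DelsarteDiag n d)))
      = (d - 1) ^ (n + 1) :=
  stmt_7_general n d hd
end

section
/- Let p be a prime, H a free Z-module of rank p - 1 with an automorphism σ of order p having no nonzero fixed vector. Then any automorphism of H commuting with σ and of finite order is of the form ±σ^i for some i; i.e., the centralizer of ⟨σ⟩ in the finite automorphism group equals ⟨σ⟩ × {±1}. -/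
/-!
Extending scalars to `ℚ`, `V = ℚ ⊗ H` is a `(p - 1)`-dimensional `ℚ`-vector space on which `σ`
satisfies the cyclotomic polynomial `Φ_p = 1 + X + ⋯ + X^(p-1)` (the fixed-point-free condition
kills the geometric sum). Hence `ℚ(ζ_p)` acts on `V` with `ζ_p ↦ σ`, making `V` a one-dimensional
`ℚ(ζ_p)`-vector space. An endomorphism commuting with `σ` is `ℚ(ζ_p)`-linear, hence multiplication
by some `c ∈ ℚ(ζ_p)`; if it has finite order, so does `c`, and the roots of unity of `ℚ(ζ_p)` are
the `±ζ_p^i`. Since `H` is free, an endomorphism of `H` is determined by its base change.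
-/

open Polynomial Module

theorem Module.End.geom_sum_eq_zero_of_pow_eq_one {R M : Type*} [Ring R] [AddCommGroup M]
    [Module R M] {f : Module.End R M} {n : ℕ} (hf : f ^ n = 1)
    (hfix : ∀ v, f v = v → v = 0) : ∑ i ∈ Finset.range n, f ^ i = 0 := by
  have hS : (f - 1) * ∑ i ∈ Finset.range n, f ^ i = 0 := by rw [mul_geom_sum, hf, sub_self]
  ext v
  exact hfix _ (sub_eq_zero.mp (LinearMap.congr_fun hS v))

theorem AlgHom.commute_of_adjoin_eq_top {R A B : Type*} [CommSemiring R] [Semiring A]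
    [Semiring B] [Algebra R A] [Algebra R B] (ρ : A →ₐ[R] B) {s : Set A}
    (hs : Algebra.adjoin R s = ⊤) {b : B} (h : ∀ x ∈ s, Commute (ρ x) b) (x : A) :
    Commute (ρ x) b := by
  have hle : Algebra.adjoin R s ≤ (Subalgebra.centralizer R {b}).comap ρ :=
    Algebra.adjoin_le fun y hy ↦ Subalgebra.mem_centralizer_iff R |>.mpr fun _ hb ↦
      (Set.mem_singleton_iff.mp hb ▸ h y hy).symm
  exact (Subalgebra.mem_centralizer_iff R).mp (hle (hs ▸ Algebra.mem_top)) b rfl |>.symm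

theorem AlgHom.exists_apply_eq_of_forall_commute {k K V : Type*} [Field k] [Field K]
    [Algebra k K] [AddCommGroup V] [Module k V] [FiniteDimensional k V]
    (hdim : finrank k K = finrank k V) (ρ : K →ₐ[k] Module.End k V) (T : Module.End k V)
    (hT : ∀ x, Commute (ρ x) T) : ∃ c, ρ c = T := by
  rcases subsingleton_or_nontrivial V with _ | _
  · exact ⟨0, Subsingleton.elim _ _⟩
  obtain ⟨v₀, hv₀⟩ := exists_ne (0 : V)
  have : FiniteDimensional k K := Module.finite_of_finrank_pos (hdim ▸ finrank_pos)
  let φ : K →ₗ[k] V := (LinearMap.applyₗ (M₂ := V) v₀).comp ρ.toLinearMap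
  have hφ : ∀ x, φ x = ρ x v₀ := fun _ ↦ rfl
  -- a nonzero `x` acts invertibly, so the orbit map of `v₀` is injective
  have hφinj : Function.Injective φ := by
    refine (injective_iff_map_eq_zero φ).mpr fun x hx ↦ by_contra fun hx0 ↦ hv₀ ?_
    rw [← Module.End.one_apply (R := k) v₀, ← map_one ρ, ← inv_mul_cancel₀ hx0, map_mul,
      Module.End.mul_apply, ← hφ, hx, map_zero]
  have hφsurj := (LinearMap.injective_iff_surjective_of_finrank_eq_finrank hdim).mp hφinj
  obtain ⟨c, hc⟩ := hφsurj (T v₀)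
  refine ⟨c, LinearMap.ext fun w ↦ ?_⟩
  obtain ⟨x, rfl⟩ := hφsurj w
  calc ρ c (ρ x v₀) = ρ x (ρ c v₀) := by
        rw [← Module.End.mul_apply, ← map_mul, mul_comm, map_mul, Module.End.mul_apply]
    _ = T (ρ x v₀) := by rw [← hφ c, hc, ← Module.End.mul_apply, (hT x).eq]; rfl

theorem IsPrimitiveRoot.exists_pow_or_neg_pow_of_isOfFinOrder_of_prime {p : ℕ}
    [hp : Fact p.Prime] {K : Type*} [Field K] [NumberField K] [IsCyclotomicExtension {p} ℚ K]
    {ζ x : K} (hζ : IsPrimitiveRoot ζ p) (hx : IsOfFinOrder x) : ∃ r : ℕ, x = ζ ^ r ∨ x = -ζ ^ r := by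
  rcases hp.out.eq_two_or_odd' with rfl | hodd
  -- `K = ℚ` is also the first cyclotomic field, whose conductor is odd
  · have : IsCyclotomicExtension {1} ℚ K := IsCyclotomicExtension.singleton_one_of_bot_eq_top <|
      Subalgebra.bot_eq_top_of_finrank_eq_one (IsCyclotomicExtension.Rat.finrank 2 K)
    obtain ⟨r, hr⟩ := IsPrimitiveRoot.one.exists_neg_pow_of_isOfFinOrder odd_one hx
    exact ⟨r, .inl (by rw [hr, hζ.eq_neg_one_of_two_right])⟩
  · obtain ⟨r, -, hr⟩ := hζ.exists_pow_or_neg_mul_pow_of_isOfFinOrder hodd hx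
    exact ⟨r, hr⟩

theorem Module.End.exists_eq_pow_or_neg_pow_of_commute {p : ℕ} [hp : Fact p.Prime] {V : Type*}
    [AddCommGroup V] [Module ℚ V] [FiniteDimensional ℚ V] (hV : finrank ℚ V = p - 1)
    {S T : Module.End ℚ V} (hS : aeval S (cyclotomic p ℚ) = 0) (hT : IsOfFinOrder T)
    (hST : Commute S T) : ∃ i : ℕ, T = S ^ i ∨ T = -S ^ i := by
  -- `CyclotomicField p ℚ` carries its own `ℚ`-algebra structure, not the canonical one
  have : IsCyclotomicExtension {p} ℚ (CyclotomicField p ℚ) :=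
    Subsingleton.elim (CyclotomicField.algebra p ℚ) DivisionRing.toRatAlgebra ▸ inferInstance
  obtain ⟨ζ, hζ⟩ : ∃ ζ : CyclotomicField p ℚ, IsPrimitiveRoot ζ p :=
    ⟨_, IsCyclotomicExtension.zeta_spec p ℚ _⟩
  rw [cyclotomic_eq_minpoly_rat hζ hp.out.pos] at hS
  let ρ := (hζ.powerBasis ℚ).lift S hS
  have hρζ : ρ ζ = S := (hζ.powerBasis ℚ).lift_gen S hS
  obtain ⟨c, rfl⟩ := ρ.exists_apply_eq_of_forall_commute
    (by rw [IsCyclotomicExtension.Rat.finrank p, Nat.totient_prime hp.out, hV]) T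
    (ρ.commute_of_adjoin_eq_top (IsCyclotomicExtension.adjoin_primitive_root_eq_top hζ)
      (by simpa [hρζ] using hST))
  have : Nontrivial V :=
    Module.nontrivial_of_finrank_pos (R := ℚ) (by have := hp.out.two_le; omega)
  have hc : IsOfFinOrder c :=
    (ρ.toRingHom.injective.isOfFinOrder_iff (f := MonoidHomClass.toMonoidHom ρ)).mp hT
  obtain ⟨i, hi⟩ := hζ.exists_pow_or_neg_pow_of_isOfFinOrder_of_prime hc
  exact ⟨i, by simpa only [← hρζ, ← map_pow, ← map_neg] using hi.imp (congrArg ρ) (congrArg ρ)⟩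

theorem stmt_10 (p : ℕ) (hp : Nat.Prime p)
    (H : Type*) [AddCommGroup H] [Module ℤ H] [Module.Free ℤ H] [Module.Finite ℤ H]
    (hrank : Module.finrank ℤ H = p - 1)
    (σ : H ≃ₗ[ℤ] H) (hord : orderOf σ = p)
    (hfix : ∀ v : H, σ v = v → v = 0)
    (τ : H ≃ₗ[ℤ] H) (hτ : IsOfFinOrder τ) (hcomm : Commute σ τ) :
    ∃ i : ℕ, (∀ v : H, τ v = (σ ^ i) v) ∨ (∀ v : H, τ v = -((σ ^ i) v)) := by
  have : Fact p.Prime := ⟨hp⟩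
  let e : (H ≃ₗ[ℤ] H) →* Module.End ℤ H := LinearEquiv.automorphismGroup.toLinearMapMonoidHom
  let bc := Module.End.baseChangeHom ℤ ℚ H
  have hσ : aeval (bc (e σ)) (cyclotomic p ℚ) = 0 := by
    have hσp : e σ ^ p = 1 := by rw [← map_pow, ← hord, pow_orderOf_eq_one, map_one]
    rw [cyclotomic_prime, map_sum]
    simpa only [map_pow, aeval_X, map_sum, map_zero] using
      congrArg bc (Module.End.geom_sum_eq_zero_of_pow_eq_one hσp hfix)
  obtain ⟨i, hi⟩ := Module.End.exists_eq_pow_or_neg_pow_of_commute (T := bc (e τ))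
    (by rw [finrank_baseChange, hrank]) hσ
    ((MonoidHomClass.toMonoidHom bc).isOfFinOrder (e.isOfFinOrder hτ)) ((hcomm.map e).map bc)
  have hbc : Function.Injective bc := LinearMap.baseChangeHom_injective ℤ H ℚ
  refine ⟨i, hi.imp (fun h v ↦ ?_) (fun h v ↦ ?_)⟩
  · exact LinearMap.congr_fun (hbc (by rw [h, map_pow, map_pow] : bc (e τ) = bc (e (σ ^ i)))) v
  · exact LinearMap.congr_fun
      (hbc (by rw [h, map_neg, map_pow, map_pow] : bc (e τ) = bc (-e (σ ^ i)))) v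
end

section
/- Let n ≥ 11 with n + 2 prime and p = (2^{n+2} + 1)/3 prime. Let S = {(-2)^i + (-2)^j mod p : 0 ≤ i < j ≤ n+1}, and suppose the set T = {a_0 + a_1(-2) + ... + a_{n+1}(-2)^{n+1} mod p : a_k ∈ {0,1}, ∑a_k = 5} has no repeated elements (all its defining sums are pairwise distinct mod p). If m ∈ (Z/pZ)^× satisfies m·S = S, then m ∈ ⟨-2⟩, the cyclic subgroup of (Z/pZ)^× generated by -2. -/
open Finset Polynomial in
private lemma aux_6n3_stmt14 (N : ℕ) (h : 6 ≤ N) : 6 * N + 3 < 2 ^ N := by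
  induction N with
  | zero => omega
  | succ k ih =>
    rcases Nat.lt_or_ge k 6 with hk | hk
    · interval_cases k <;> simp_all
    · have := ih hk
      have : 2 ^ (k+1) = 2 * 2 ^ k := by ring
      omega

open Finset Polynomial in


theorem stmt_14 (n p : ℕ) (hn : 11 ≤ n) (hn2 : Nat.Prime (n + 2))
    (hp : Nat.Prime p) (hdp : 3 * p = 2 ^ (n + 2) + 1)
    (S : Set (ZMod p))
    (hS : S = {x : ZMod p | ∃ i j : ℕ, i < j ∧ j ≤ n + 1 ∧ x = (-2) ^ i + (-2) ^ j})
    (hT : ∀ A B : Finset (Fin (n + 2)), A.card = 5 → B.card = 5 →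
      (∑ i ∈ A, (-2 : ZMod p) ^ (i : ℕ)) = (∑ i ∈ B, (-2 : ZMod p) ^ (i : ℕ)) → A = B)
    (m : ZMod p) (hm : IsUnit m) (hmS : (fun s => m * s) '' S = S) :
    ∃ k : ℕ, m = (-2) ^ k := by
  haveI : Fact (Nat.Prime p) := ⟨hp⟩
  set N := n + 2 with hNdef
  set ζ : ZMod p := -2 with hζdef
  -- ## basic numerics
  have hN13 : 13 ≤ N := by omega
  have hNodd : Odd N := hn2.odd_of_ne_two (by omega)
  have h2N : 6 * N + 3 < 2 ^ N := aux_6n3_stmt14 N (by omega)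
  have hpN : 2 * N + 1 < p := by omega
  have hp3 : p ≠ 3 := by intro h; rw [h] at hdp; omega
  have h2Nzmod : (2 : ZMod p) ^ N = -1 := by
    have h0 : ((3 * p : ℕ) : ZMod p) = ((2 ^ N + 1 : ℕ) : ZMod p) := by rw [hdp]
    push_cast at h0
    rw [ZMod.natCast_self] at h0
    linear_combination -h0
  have hζN : ζ ^ N = 1 := by
    rw [hζdef, Odd.neg_pow hNodd, h2Nzmod]; ring
  have hζne1 : ζ ≠ 1 := by
    intro h
    have h3 : ((3 : ℕ) : ZMod p) = 0 := by
      have : (1 : ZMod p) + 2 = 0 := by rw [← h, hζdef]; ring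
      push_cast; linear_combination this
    rw [ZMod.natCast_eq_zero_iff] at h3
    exact hp3 ((Nat.prime_dvd_prime_iff_eq hp Nat.prime_three).mp h3)
  have horder : orderOf ζ = N := by
    have hdvd : orderOf ζ ∣ N := orderOf_dvd_of_pow_eq_one hζN
    rcases (Nat.Prime.eq_one_or_self_of_dvd (by exact hn2) _ hdvd) with h | h
    · exact absurd (orderOf_eq_one_iff.mp h) hζne1
    · exact h
  have hζt : ∀ t : ℕ, 0 < t → t < N → ζ ^ t ≠ 1 := by
    intro t ht1 ht2 h
    have := orderOf_dvd_of_pow_eq_one h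
    rw [horder] at this
    exact absurd (Nat.le_of_dvd ht1 this) (by omega)
  have hgeom : ∀ t : ℕ, 0 < t → t < N → ∑ i ∈ range N, (ζ ^ t) ^ i = 0 := by
    intro t ht1 ht2
    rw [geom_sum_eq (hζt t ht1 ht2)]
    have : (ζ ^ t) ^ N = 1 := by rw [pow_right_comm, hζN, one_pow]
    rw [this]; simp
  -- ## the full square power sum
  have hPt : ∀ t : ℕ, (t = 0 ∨ t = N) → (∑ j ∈ range N, (ζ^t)^j) = (N : ZMod p) := by
    intro t h0
    have h1 : ζ ^ t = 1 := by rcases h0 with h | h <;> rw [h] <;> simp [hζN]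
    simp [h1]
  have hsq : ∑ i ∈ range N, ∑ j ∈ range N, (ζ^i + ζ^j)^N = (N : ZMod p) * N * 2 := by
    have expand : ∑ i ∈ range N, ∑ j ∈ range N, (ζ^i + ζ^j)^N
        = ∑ t ∈ range (N+1), (∑ i ∈ range N, (ζ^t)^i) *
            ((∑ j ∈ range N, (ζ^(N-t))^j) * (N.choose t : ZMod p)) := by
      simp_rw [add_pow]
      rw [show (∑ i ∈ range N, ∑ j ∈ range N, ∑ t ∈ range (N+1),
          (ζ^i)^t * (ζ^j)^(N-t) * (N.choose t : ZMod p))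
        = ∑ i ∈ range N, ∑ t ∈ range (N+1), ∑ j ∈ range N,
          (ζ^i)^t * (ζ^j)^(N-t) * (N.choose t : ZMod p) from
        Finset.sum_congr rfl fun i _ => Finset.sum_comm]
      rw [Finset.sum_comm]
      refine Finset.sum_congr rfl fun t _ => ?_
      simp_rw [mul_assoc, ← Finset.mul_sum, ← Finset.sum_mul]
      congr 1
      · exact Finset.sum_congr rfl fun i _ => (pow_right_comm ζ i t)
      · congr 1
        exact Finset.sum_congr rfl fun j _ => (pow_right_comm ζ j (N-t))
    rw [expand]
    rw [← Finset.sum_subset (s₁ := ({0, N} : Finset ℕ))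
        (by intro x hx; simp at hx; simp [Finset.mem_range]; omega)
        (by
          intro t ht hts
          simp only [Finset.mem_insert, Finset.mem_singleton] at hts
          push_neg at hts
          simp only [Finset.mem_range] at ht
          rw [hgeom t (by omega) (by omega)]
          ring)]
    rw [Finset.sum_pair (by omega : (0:ℕ) ≠ N)]
    rw [hPt 0 (Or.inl rfl), hPt N (Or.inr rfl), hPt (N - 0) (by omega), hPt (N - N) (by omega)]
    simp
    ring
  -- ## the sum over strict pairs
  set sq := (range N) ×ˢ (range N) with hsqdef
  set g : ℕ × ℕ → ZMod p := fun q => (ζ^q.1 + ζ^q.2)^N with hg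
  set P : Finset (ℕ × ℕ) := sq.filter (fun q => q.1 < q.2) with hPdef
  have hW : 2 * ∑ q ∈ P, g q = (N : ZMod p) * N * 2 + N := by
    have htot : ∑ q ∈ sq, g q = (N : ZMod p) * N * 2 := by
      rw [Finset.sum_product]; exact hsq
    have h1 := Finset.sum_filter_add_sum_filter_not sq (fun q => q.1 < q.2) g
    have h2 := Finset.sum_filter_add_sum_filter_not
      (sq.filter (fun q => ¬ q.1 < q.2)) (fun q => q.2 < q.1) g
    rw [Finset.filter_filter, Finset.filter_filter] at h2
    have e1 : sq.filter (fun q => ¬ q.1 < q.2 ∧ q.2 < q.1) = sq.filter (fun q => q.2 < q.1) :=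
      Finset.filter_congr (fun q _ => by
        constructor
        · exact fun h => h.2
        · exact fun h => ⟨by omega, h⟩)
    have e2 : sq.filter (fun q => ¬ q.1 < q.2 ∧ ¬ q.2 < q.1) = sq.filter (fun q => q.1 = q.2) :=
      Finset.filter_congr (fun q _ => by
        constructor
        · exact fun h => by omega
        · exact fun h => by omega)
    rw [e1, e2] at h2
    have hswap : ∑ q ∈ sq.filter (fun q => q.2 < q.1), g q = ∑ q ∈ P, g q := by
      refine Finset.sum_equiv (Equiv.prodComm ℕ ℕ) ?_ ?_
      · intro q
        simp only [Finset.mem_filter, hPdef, hsqdef, Finset.mem_product, Equiv.prodComm_apply,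
          Prod.fst_swap, Prod.snd_swap]
        tauto
      · intro q _
        simp only [hg, Equiv.prodComm_apply, Prod.fst_swap, Prod.snd_swap]
        rw [add_comm]
    have hdiagset : sq.filter (fun q => q.1 = q.2) = (range N).image (fun i => (i, i)) := by
      ext ⟨a, b⟩
      simp only [Finset.mem_filter, hsqdef, Finset.mem_product, Finset.mem_image,
        Finset.mem_range, Prod.mk.injEq]
      constructor
      · rintro ⟨⟨ha, hb⟩, hab⟩; exact ⟨a, ha, rfl, hab⟩
      · rintro ⟨i, hi, rfl, rfl⟩; exact ⟨⟨hi, hi⟩, rfl⟩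
    have hdiag : ∑ q ∈ sq.filter (fun q => q.1 = q.2), g q = -(N : ZMod p) := by
      rw [hdiagset, Finset.sum_image (by intro x _ y _ h; exact (Prod.mk.injEq _ _ _ _).mp h |>.1)]
      have hone : ∀ i ∈ range N, g (i, i) = -1 := by
        intro i _
        show (ζ^i + ζ^i)^N = -1
        rw [← two_mul, mul_pow, h2Nzmod, pow_right_comm, hζN, one_pow, mul_one]
      rw [Finset.sum_congr rfl hone]
      simp
    rw [hswap, hdiag] at h2
    rw [two_mul]
    linear_combination h1 + h2 + htot
  -- ## injectivity of the pair map
  set f : ℕ × ℕ → ZMod p := fun q => ζ^q.1 + ζ^q.2 with hf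
  have hinj : ∀ q1 ∈ P, ∀ q2 ∈ P, f q1 = f q2 → q1 = q2 := by
    rintro ⟨i, j⟩ hq1 ⟨k, l⟩ hq2 heq
    simp only [hPdef, hsqdef, Finset.mem_filter, Finset.mem_product, Finset.mem_range] at hq1 hq2
    obtain ⟨⟨hiN, hjN⟩, hij⟩ := hq1
    obtain ⟨⟨hkN, hlN⟩, hkl⟩ := hq2
    set i' : Fin (n+2) := ⟨i, hiN⟩
    set j' : Fin (n+2) := ⟨j, hjN⟩
    set k' : Fin (n+2) := ⟨k, hkN⟩
    set l' : Fin (n+2) := ⟨l, hlN⟩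
    have hcard4 : (({i', j', k', l'} : Finset (Fin (n+2)))).card ≤ 4 := by
      apply le_trans (Finset.card_insert_le _ _)
      apply Nat.succ_le_succ
      apply le_trans (Finset.card_insert_le _ _)
      apply Nat.succ_le_succ
      apply le_trans (Finset.card_insert_le _ _)
      apply Nat.succ_le_succ
      simp
    have hcard : 3 ≤ ((Finset.univ : Finset (Fin (n+2))) \ {i', j', k', l'}).card := by
      rw [Finset.card_sdiff_of_subset (Finset.subset_univ _)]
      rw [Finset.card_univ, Fintype.card_fin]
      omega
    obtain ⟨C, hCsub, hCcard⟩ := Finset.exists_subset_card_eq hcard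
    have hCdisj : ∀ x ∈ C, x ≠ i' ∧ x ≠ j' ∧ x ≠ k' ∧ x ≠ l' := by
      intro x hx
      have := hCsub hx
      simp only [Finset.mem_sdiff, Finset.mem_insert, Finset.mem_singleton] at this
      push_neg at this
      exact this.2
    have hij' : i' ≠ j' := by simp only [i', j', Fin.mk.injEq, ne_eq]; omega
    have hkl' : k' ≠ l' := by simp only [k', l', Fin.mk.injEq, ne_eq]; omega
    have hdisj1 : Disjoint ({i', j'} : Finset (Fin (n+2))) C := by
      rw [Finset.disjoint_left]
      intro x hx hxC
      have := hCdisj x hxC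
      simp only [Finset.mem_insert, Finset.mem_singleton] at hx
      rcases hx with h | h <;> subst h <;> tauto
    have hdisj2 : Disjoint ({k', l'} : Finset (Fin (n+2))) C := by
      rw [Finset.disjoint_left]
      intro x hx hxC
      have := hCdisj x hxC
      simp only [Finset.mem_insert, Finset.mem_singleton] at hx
      rcases hx with h | h <;> subst h <;> tauto
    have hA : (({i', j'} : Finset (Fin (n+2))) ∪ C).card = 5 := by
      rw [Finset.card_union_of_disjoint hdisj1, Finset.card_pair hij', hCcard]
    have hB : (({k', l'} : Finset (Fin (n+2))) ∪ C).card = 5 := by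
      rw [Finset.card_union_of_disjoint hdisj2, Finset.card_pair hkl', hCcard]
    have hsum : (∑ x ∈ ({i', j'} : Finset (Fin (n+2))) ∪ C, ζ ^ (x : ℕ))
        = ∑ x ∈ ({k', l'} : Finset (Fin (n+2))) ∪ C, ζ ^ (x : ℕ) := by
      rw [Finset.sum_union hdisj1, Finset.sum_union hdisj2,
        Finset.sum_pair hij', Finset.sum_pair hkl']
      show ζ ^ i + ζ ^ j + _ = ζ ^ k + ζ ^ l + _
      rw [show ζ ^ i + ζ ^ j = ζ ^ k + ζ ^ l from heq]
    have hAB := hT _ _ hA hB hsum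
    have hmem : ∀ x : Fin (n+2), x ∈ ({i', j'} : Finset (Fin (n+2))) ∪ C
        ↔ x ∈ ({k', l'} : Finset (Fin (n+2))) ∪ C := fun x => by rw [hAB]
    have h1 : i = k ∨ i = l := by
      have := (hmem i').mp (by simp)
      simp only [Finset.mem_union, Finset.mem_insert, Finset.mem_singleton] at this
      rcases this with (h | h) | h
      · left; exact congrArg Fin.val h
      · right; exact congrArg Fin.val h
      · exact absurd rfl (hCdisj i' h).1
    have h2 : j = k ∨ j = l := by
      have := (hmem j').mp (by simp)
      simp only [Finset.mem_union, Finset.mem_insert, Finset.mem_singleton] at this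
      rcases this with (h | h) | h
      · left; exact congrArg Fin.val h
      · right; exact congrArg Fin.val h
      · exact absurd rfl (hCdisj j' h).2.1
    have h3 : k = i ∨ k = j := by
      have := (hmem k').mpr (by simp)
      simp only [Finset.mem_union, Finset.mem_insert, Finset.mem_singleton] at this
      rcases this with (h | h) | h
      · left; exact congrArg Fin.val h
      · right; exact congrArg Fin.val h
      · exact absurd rfl (hCdisj k' h).2.2.1
    have : i = k ∧ j = l := by omega
    exact Prod.ext this.1 this.2
  -- ## S as a finset
  set F : Finset (ZMod p) := P.image f with hF
  have hSF : S = ↑F := by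
    ext x
    rw [hS]
    simp only [Set.mem_setOf_eq, hF, Finset.mem_coe, Finset.mem_image, hPdef, hsqdef,
      Finset.mem_filter, Finset.mem_product, Finset.mem_range, hf]
    constructor
    · rintro ⟨i, j, h1, h2, h3⟩
      exact ⟨(i, j), ⟨⟨by omega, by omega⟩, h1⟩, h3.symm⟩
    · rintro ⟨⟨i, j⟩, ⟨⟨hiN, hjN⟩, hij⟩, hx⟩
      exact ⟨i, j, hij, by omega, hx.symm⟩
  have hmF : F.image (fun s => m * s) = F := by
    apply Finset.coe_injective
    rw [Finset.coe_image, ← hSF]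
    exact hmS
  -- ## invariance of the power sum
  have hFW : ∑ x ∈ F, x ^ N = ∑ q ∈ P, g q := by
    rw [hF, Finset.sum_image hinj]
  have hWinv : ∑ x ∈ F, x ^ N = m ^ N * ∑ x ∈ F, x ^ N := by
    conv_lhs => rw [← hmF]
    rw [Finset.sum_image (fun x _ y _ h => mul_left_cancel₀ hm.ne_zero h)]
    simp_rw [mul_pow, ← Finset.mul_sum]
  have hWne : ∑ x ∈ F, x ^ N ≠ 0 := by
    intro h0
    rw [hFW] at h0
    rw [h0, mul_zero] at hW
    rw [hNdef] at hW
    have hcast : ((2 * (n+2) * (n+2) + (n+2) : ℕ) : ZMod p) = 0 := by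
      push_cast
      push_cast at hW
      linear_combination -hW
    rw [ZMod.natCast_eq_zero_iff] at hcast
    have hfac : 2 * (n+2) * (n+2) + (n+2) = (n+2) * (2 * (n+2) + 1) := by ring
    rw [hfac] at hcast
    rw [← hNdef] at hcast
    rcases (Nat.Prime.dvd_mul hp).mp hcast with h | h
    · have := Nat.le_of_dvd (by omega) h
      omega
    · have := Nat.le_of_dvd (by omega) h
      omega
  have hmN : m ^ N = 1 := by
    have hz : (m ^ N - 1) * (∑ x ∈ F, x ^ N) = 0 := by linear_combination -hWinv
    rcases mul_eq_zero.mp hz with h' | h'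
    · exact sub_eq_zero.mp h'
    · exact absurd h' hWne
  -- ## conclude: m is a power of ζ
  set R : Finset (ZMod p) := (range N).image (fun k => ζ ^ k) with hR
  by_cases hmR : m ∈ R
  · rw [hR, Finset.mem_image] at hmR
    obtain ⟨k, _, hk⟩ := hmR
    exact ⟨k, hk.symm⟩
  · exfalso
    have hRcard : R.card = N := by
      rw [hR, Finset.card_image_of_injOn, Finset.card_range]
      have hcoe : (↑(range N) : Set ℕ) = Set.Iio (orderOf ζ) := by
        rw [Finset.coe_range, horder]
      rw [hcoe]
      exact pow_injOn_Iio_orderOf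
    set q : Polynomial (ZMod p) := X ^ N - C 1 with hq
    have hqne : q ≠ 0 := X_pow_sub_C_ne_zero (by omega) 1
    have hsub : insert m R ⊆ q.roots.toFinset := by
      intro x hx
      rw [Multiset.mem_toFinset, Polynomial.mem_roots']
      refine ⟨hqne, ?_⟩
      have hxN : x ^ N = 1 := by
        rcases Finset.mem_insert.mp hx with h | h
        · rw [h]; exact hmN
        · rw [hR, Finset.mem_image] at h
          obtain ⟨k, _, hk⟩ := h
          rw [← hk, pow_right_comm, hζN, one_pow]
      simp [hq, Polynomial.IsRoot, hxN]
    have hcard1 : (insert m R).card = N + 1 := by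
      rw [Finset.card_insert_of_notMem hmR, hRcard]
    have hle1 := Finset.card_le_card hsub
    have hle2 := Multiset.toFinset_card_le q.roots
    have hle3 := Polynomial.card_roots' q
    have hdeg : q.natDegree = N := by rw [hq]; exact natDegree_X_pow_sub_C
    omega
end

section
/- Let d ≥ 3, let F = y_1^{d-1}y_2 + ... + y_{j-1}^{d-1}y_j + y_j^d be the Delsarte form, and let φ be the linear substitution fixing y_1,...,y_{j-2}, sending y_{j-1} ↦ a·y_{j-1} and y_j ↦ b·y_{j-1} + c·y_j with a, c ≠ 0. If φ(F) = λF for some λ ∈ C^*, then b = 0. -/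
open MvPolynomial

theorem stmt_19 (N d : ℕ) (hd : 3 ≤ d) (a b c lam : ℂ)
    (ha : a ≠ 0) (hc : c ≠ 0) (hlam : lam ≠ 0) :
    -- the Delsarte form `y₁^{d-1}y₂ + ⋯ + y_{j-1}^{d-1}y_j + y_j^d` in `j = N + 2` variables
    let F : MvPolynomial (Fin (N + 2)) ℂ :=
      (∑ k : Fin (N + 1), X k.castSucc ^ (d - 1) * X k.succ) + X (Fin.last (N + 1)) ^ d
    -- the predecessor of the last variable, `y_{j-1}`
    let prev : Fin (N + 2) := ⟨N, by omega⟩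
    -- the substitution fixing `y₁, …, y_{j-2}`, sending `y_{j-1} ↦ a·y_{j-1}` and
    -- `y_j ↦ b·y_{j-1} + c·y_j`
    let sub : Fin (N + 2) → MvPolynomial (Fin (N + 2)) ℂ := fun k =>
      if k = Fin.last (N + 1) then C b * X prev + C c * X k
      else if k = prev then C a * X k
      else X k
    MvPolynomial.aeval sub F = C lam * F → b = 0 := by
  intro F prev sub h
  -- evaluation point: y_{j-1} = 1, y_j = t, others 0
  set p : ℂ → Fin (N + 2) → ℂ := fun t k =>
    if k = Fin.last (N + 1) then t else if k = prev then 1 else 0 with hp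
  have hprevlast : prev ≠ Fin.last (N + 1) := by
    simp [prev, Fin.ext_iff]
  have hd1 : d - 1 ≠ 0 := by omega
  have key : ∀ t : ℂ, a ^ (d - 1) * (b + c * t) + (b + c * t) ^ d
      = lam * (t + t ^ d) := by
    intro t
    have h' := congrArg (MvPolynomial.eval (p t)) h
    -- evaluate LHS and RHS
    rw [show F = (∑ k : Fin (N + 1), X k.castSucc ^ (d - 1) * X k.succ)
        + X (Fin.last (N + 1)) ^ d from rfl] at h'
    simp only [map_add, map_sum, map_mul, map_pow, aeval_X, eval_add, eval_sum,
      eval_mul, eval_pow, eval_X, eval_C] at h'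
    -- compute the sums
    have e1 : ∀ k : Fin (N + 1), MvPolynomial.eval (p t) (sub k.castSucc)
        ^ (d - 1) * MvPolynomial.eval (p t) (sub k.succ)
        = if k = Fin.last N then a ^ (d - 1) * (b + c * t) else 0 := by
      intro k
      by_cases hk : k = Fin.last N
      · subst hk
        have h1 : (Fin.last N).castSucc = prev := by simp [prev, Fin.ext_iff]
        have h2 : (Fin.last N).succ = Fin.last (N + 1) := by simp [Fin.ext_iff]
        simp only [h1, h2, sub, if_pos rfl, if_neg hprevlast]
        simp [p, hprevlast, if_neg hprevlast]
      · have h1 : k.castSucc ≠ Fin.last (N + 1) := by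
          simp [Fin.ext_iff]; omega
        have h2 : k.castSucc ≠ prev := by
          simp [prev, Fin.ext_iff]
          intro hkk; exact hk (Fin.ext hkk)
        simp only [sub, if_neg h1, if_neg h2, eval_X]
        simp only [p, if_neg h1, if_neg h2]
        simp [zero_pow hd1, hk]
    have e2 : ∀ k : Fin (N + 1), p t k.castSucc ^ (d - 1) * p t k.succ
        = if k = Fin.last N then t else 0 := by
      intro k
      by_cases hk : k = Fin.last N
      · subst hk
        have h1 : (Fin.last N).castSucc = prev := by simp [prev, Fin.ext_iff]
        have h2 : (Fin.last N).succ = Fin.last (N + 1) := by simp [Fin.ext_iff]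
        simp [h1, h2, p, hprevlast]
      · have h1 : k.castSucc ≠ Fin.last (N + 1) := by
          simp [Fin.ext_iff]; omega
        have h2 : k.castSucc ≠ prev := by
          simp [prev, Fin.ext_iff]
          intro hkk; exact hk (Fin.ext hkk)
        simp [p, h1, h2, zero_pow hd1, hk]
    rw [Finset.sum_congr rfl (fun k _ => e1 k),
        Finset.sum_congr rfl (fun k _ => e2 k)] at h'
    simp only [Finset.sum_ite_eq', Finset.mem_univ, if_pos] at h'
    have h3 : MvPolynomial.eval (p t) (sub (Fin.last (N + 1)))
        = b + c * t := by
      simp [sub, p, hprevlast, if_neg hprevlast]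
    have h4 : p t (Fin.last (N + 1)) = t := by simp [p]
    rw [h3, h4] at h'
    exact h'
  -- turn into a polynomial identity
  have hpoly : (Polynomial.C (a ^ (d - 1)) *
      (Polynomial.C b + Polynomial.C c * Polynomial.X) +
      (Polynomial.C b + Polynomial.C c * Polynomial.X) ^ d)
      = Polynomial.C lam * (Polynomial.X + Polynomial.X ^ d) := by
    apply Polynomial.funext
    intro t
    simpa using key t
  -- compare coefficients at degree d - 1
  have hco := congrArg (fun q => Polynomial.coeff q (d - 1)) hpoly
  have hfac : Polynomial.C b + Polynomial.C c * Polynomial.X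
      = Polynomial.C c * (Polynomial.X + Polynomial.C (b / c)) := by
    rw [mul_add, ← Polynomial.C_mul, mul_div_cancel₀ _ hc, add_comm]
  rw [hfac] at hco
  simp only [mul_pow, ← Polynomial.C_pow, Polynomial.coeff_add,
    Polynomial.coeff_C_mul, Polynomial.coeff_X_add_C_pow, Polynomial.coeff_add,
    Polynomial.coeff_X_pow, Polynomial.coeff_X, Polynomial.coeff_C] at hco
  have hne1 : ¬ ((1:ℕ) = d - 1) := by omega
  have hne0 : ¬ (d - 1 = 0) := by omega
  have hned : ¬ (d - 1 = d) := by omega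
  rw [if_neg hne1, if_neg hned, if_neg hne0] at hco
  have hdd : d - (d - 1) = 1 := by omega
  rw [hdd] at hco
  have hchoose : (d.choose (d - 1) : ℂ) = (d : ℂ) := by
    rw [Nat.choose_symm (by omega), Nat.choose_one_right]
  rw [pow_one, hchoose] at hco
  -- hco : a^(d-1) * (...) + c^d * (b/c * d) = lam * (0 + 0)
  have hdne : (d : ℂ) ≠ 0 := Nat.cast_ne_zero.mpr (by omega)
  have hz : c ^ d * (b / c * d) = 0 := by
    simpa using hco
  have h5 : b / c * d = 0 := by
    rcases mul_eq_zero.mp hz with h | h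
    · exact absurd h (pow_ne_zero _ hc)
    · exact h
  rcases mul_eq_zero.mp h5 with h | h
  · rcases div_eq_zero_iff.mp h with h | h
    · exact h
    · exact absurd h hc
  · exact absurd h hdne
end
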